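/- Let γ : ℝ → ℝ³ be a unit speed spherical curve with differentiable geodesic curvature k_g, let b > 0, a ∈ ℝ³, k : ℝ → ℝ a C¹ function with antiderivative K, and define c by c'(s) = b e^{K(s)} γ(s). Then the geodesic curvature of the spherical image of the principal normal indicatrix of c satisfies σ(s) = (κ²/(ν (κ² + τ²)^{3/2}))·(τ/κ)'(s) = k_g'(s)/(k_g(s)² + 1)^{3/2} for all s, where ν, κ, τ are the speed, curvature and torsion of c. -/

import Mathlib

open Matrix


noncomputable section

/-- ℝ³ as a Euclidean space. -/
abbrev E3 : Type := EuclideanSpace ℝ (Fin 3)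

/-- The cross product on ℝ³. -/
def cross3 (u v : E3) : E3 :=
  (WithLp.equiv 2 (Fin 3 → ℝ)).symm
    (crossProduct ((WithLp.equiv 2 (Fin 3 → ℝ)) u) ((WithLp.equiv 2 (Fin 3 → ℝ)) v))

/-- The (real) inner product on ℝ³. -/
def inner3 (u v : E3) : ℝ := inner ℝ u v

/-- The speed ν of a curve. -/
def speed (c : ℝ → E3) (s : ℝ) : ℝ := ‖deriv c s‖

/-- The curvature κ of a curve. -/
def curvature (c : ℝ → E3) (s : ℝ) : ℝ :=
  ‖cross3 (deriv c s) (deriv (deriv c) s)‖ / ‖deriv c s‖ ^ 3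

/-- The torsion τ of a curve. -/
def torsion (c : ℝ → E3) (s : ℝ) : ℝ :=
  inner3 (cross3 (deriv c s) (deriv (deriv c) s)) (deriv (deriv (deriv c)) s) /
    ‖cross3 (deriv c s) (deriv (deriv c) s)‖ ^ 2

/-- σ(s) = (κ²/(ν (κ² + τ²)^{3/2}))·(τ/κ)'(s), the geodesic curvature of the spherical
image of the principal normal indicatrix. -/
def sigmaOf (c : ℝ → E3) (s : ℝ) : ℝ :=
  (curvature c s) ^ 2 / (speed c s * ((curvature c s) ^ 2 + (torsion c s) ^ 2) ^ ((3 : ℝ) / 2)) *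
    deriv (fun t => torsion c t / curvature c t) s

/-- The geodesic curvature k_g(s) = det(γ(s), γ'(s), γ''(s)) = ⟨γ(s) × γ'(s), γ''(s)⟩ of a
unit speed spherical curve γ. -/
def kgOf (γ : ℝ → E3) (s : ℝ) : ℝ :=
  inner3 (cross3 (γ s) (deriv γ s)) (deriv (deriv γ) s)

/-- Build a vector in ℝ³ from coordinates. -/
def mk3 (x y z : ℝ) : E3 := (WithLp.equiv 2 (Fin 3 → ℝ)).symm ![x, y, z]

end

section helpers

lemma inner3_eq_dot (u v : E3) :
    inner3 u v = (WithLp.equiv 2 (Fin 3 → ℝ)) u ⬝ᵥ (WithLp.equiv 2 (Fin 3 → ℝ)) v := by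
  simp [inner3, PiLp.inner_apply, dotProduct, RCLike.inner_apply, mul_comm]

lemma norm_sq_eq_dot (u : E3) :
    ‖u‖ ^ 2 = (WithLp.equiv 2 (Fin 3 → ℝ)) u ⬝ᵥ (WithLp.equiv 2 (Fin 3 → ℝ)) u := by
  rw [← real_inner_self_eq_norm_sq]; exact inner3_eq_dot u u

lemma cross3_comb (a b d : ℝ) (u v w : E3) :
    cross3 (a • u) (b • v + d • w) = (a*b) • cross3 u v + (a*d) • cross3 u w := by
  simp only [cross3, WithLp.equiv_apply, WithLp.ofLp_smul, WithLp.ofLp_add, map_add, _root_.map_smul,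
    LinearMap.add_apply, LinearMap.smul_apply, WithLp.equiv_symm_apply, WithLp.toLp_add, WithLp.toLp_smul,
    smul_smul]
  rw [mul_comm b a, mul_comm d a]

lemma cross3_self (u : E3) : cross3 u u = 0 := by
  simp [cross3, cross_self]

lemma inner3_cross_left (u v : E3) : inner3 (cross3 u v) u = 0 := by
  rw [inner3_eq_dot]
  simp only [cross3, Equiv.apply_symm_apply]
  rw [dotProduct_comm]; exact dot_self_cross _ _

lemma inner3_cross_right (u v : E3) : inner3 (cross3 u v) v = 0 := by
  rw [inner3_eq_dot]
  simp only [cross3, Equiv.apply_symm_apply]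
  rw [dotProduct_comm]; exact dot_cross_self _ _

lemma inner3_smul_left (a : ℝ) (u v : E3) : inner3 (a • u) v = a * inner3 u v := by
  unfold inner3; exact real_inner_smul_left u v a

lemma inner3_smul_right (a : ℝ) (u v : E3) : inner3 u (a • v) = a * inner3 u v := by
  simp [inner3, inner_smul_right]

lemma inner3_add_right (u v w : E3) : inner3 u (v + w) = inner3 u v + inner3 u w := by
  simp [inner3, inner_add_right]

lemma norm_cross_sq (u v : E3) :
    ‖cross3 u v‖ ^ 2 = ‖u‖^2 * ‖v‖^2 - (inner3 u v)^2 := by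
  rw [norm_sq_eq_dot, inner3_eq_dot, norm_sq_eq_dot, norm_sq_eq_dot]
  simp only [cross3, Equiv.apply_symm_apply, cross_dot_cross]
  rw [dotProduct_comm ((WithLp.equiv 2 (Fin 3 → ℝ)) v) ((WithLp.equiv 2 (Fin 3 → ℝ)) u)]
  ring

end helpers

/-- For c with c' = b e^K γ, b > 0, the geodesic curvature of the spherical
image of the principal normal indicatrix of c is σ(s) = k_g'(s)/(k_g(s)² + 1)^{3/2}. -/

theorem sigma_formula_exp_curve
    (γ : ℝ → E3) (hγ : ContDiff ℝ (⊤ : ℕ∞) γ)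
    (hsph : ∀ s, ‖γ s‖ = 1) (hunit : ∀ s, ‖deriv γ s‖ = 1)
    (hkgd : Differentiable ℝ (kgOf γ))
    (b : ℝ) (hb : 0 < b)
    (k K : ℝ → ℝ) (hk : ContDiff ℝ 1 k) (hK : ∀ s, HasDerivAt K (k s) s)
    (c : ℝ → E3) (hc : ∀ s, HasDerivAt c ((b * Real.exp (K s)) • γ s) s) :
    ∀ s : ℝ, sigmaOf c s = deriv (kgOf γ) s / ((kgOf γ s) ^ 2 + 1) ^ ((3 : ℝ) / 2) := by
  set f : ℝ → ℝ := fun s => b * Real.exp (K s) with hf_def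
  have hfpos : ∀ s, 0 < f s := fun s => mul_pos hb (Real.exp_pos _)
  have hfne : ∀ s, f s ≠ 0 := fun s => (hfpos s).ne'
  have hγd : ∀ s, HasDerivAt γ (deriv γ s) s := fun s =>
    (hγ.differentiable (by simp) s).hasDerivAt
  have hγ' : ContDiff ℝ (⊤ : ℕ∞) (deriv γ) := (contDiff_infty_iff_deriv.mp (hγ.of_le (by simp))).2
  have hγ'd : ∀ s, HasDerivAt (deriv γ) (deriv (deriv γ) s) s := fun s =>
    (hγ'.differentiable (by simp) s).hasDerivAt
  have hfd : ∀ s, HasDerivAt f (f s * k s) s := by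
    intro s
    have := ((hK s).exp).const_mul b
    simpa [hf_def, mul_assoc] using this
  have hkd : ∀ s, HasDerivAt k (deriv k s) s := fun s =>
    ((hk.differentiable one_ne_zero) s).hasDerivAt
  have hdc : deriv c = fun s => f s • γ s := funext fun s => (hc s).deriv
  have hd2at : ∀ s, HasDerivAt (deriv c) (f s • deriv γ s + (f s * k s) • γ s) s := by
    intro s
    rw [hdc]
    exact (hfd s).smul (hγd s)
  have hd2 : deriv (deriv c) = fun s => f s • deriv γ s + (f s * k s) • γ s :=
    funext fun s => (hd2at s).deriv
  have hfkd : ∀ s, HasDerivAt (fun t => f t * k t) (f s * k s * k s + f s * deriv k s) s :=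
    fun s => (hfd s).mul (hkd s)
  have hd3at : ∀ s, HasDerivAt (deriv (deriv c))
      (f s • deriv (deriv γ) s + (f s * k s) • deriv γ s
        + ((f s * k s) • deriv γ s + (f s * k s * k s + f s * deriv k s) • γ s)) s := by
    intro s
    rw [hd2]
    exact ((hfd s).smul (hγ'd s)).add ((hfkd s).smul (hγd s))
  -- orthogonality
  have horth1 : ∀ s, inner3 (γ s) (deriv γ s) = 0 := by
    intro s
    have h1 : HasDerivAt (fun t => (inner ℝ (γ t) (γ t) : ℝ))
        ((inner ℝ (γ s) (deriv γ s) : ℝ) + (inner ℝ (deriv γ s) (γ s) : ℝ)) s :=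
      HasDerivAt.inner ℝ (hγd s) (hγd s)
    have h2 : (fun t => (inner ℝ (γ t) (γ t) : ℝ)) = fun _ => (1:ℝ) := by
      funext t; rw [real_inner_self_eq_norm_sq, hsph t]; norm_num
    rw [h2] at h1
    have h0 := (hasDerivAt_const s (1:ℝ)).unique h1
    have hcomm : (inner ℝ (deriv γ s) (γ s) : ℝ) = inner ℝ (γ s) (deriv γ s) :=
      real_inner_comm _ _
    rw [hcomm] at h0
    have : inner ℝ (γ s) (deriv γ s) = (0:ℝ) := by linarith
    simpa [inner3] using this
  -- norm of cross of γ and γ'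
  have hXnorm : ∀ s, ‖cross3 (γ s) (deriv γ s)‖ = 1 := by
    intro s
    have h := norm_cross_sq (γ s) (deriv γ s)
    rw [hsph, hunit, horth1] at h
    nlinarith [norm_nonneg (cross3 (γ s) (deriv γ s))]
  -- cross product of first two derivatives
  have hcross : ∀ s, cross3 (deriv c s) (deriv (deriv c) s)
      = (f s * f s) • cross3 (γ s) (deriv γ s) := by
    intro s
    rw [congrFun hd2 s, congrFun hdc s]
    rw [cross3_comb]
    simp [cross3_self]
  have hnc1 : ∀ s, ‖deriv c s‖ = f s := by
    intro s
    simp only [hdc]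
    rw [norm_smul, hsph]
    simp [abs_of_pos (hfpos s)]
  have hnc2 : ∀ s, ‖cross3 (deriv c s) (deriv (deriv c) s)‖ = f s * f s := by
    intro s
    rw [hcross s, norm_smul, hXnorm]
    simp [abs_of_pos (mul_pos (hfpos s) (hfpos s))]
  have hκ : ∀ s, curvature c s = 1 / f s := by
    intro s
    rw [curvature, hnc2, hnc1]
    field_simp
  have hτnum : ∀ s, inner3 (cross3 (deriv c s) (deriv (deriv c) s)) (deriv (deriv (deriv c)) s)
      = (f s * f s * f s) * kgOf γ s := by
    intro s
    rw [hcross s, (hd3at s).deriv]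
    simp only [inner3_add_right, inner3_smul_right, inner3_smul_left,
      inner3_cross_left, inner3_cross_right, kgOf]
    ring
  have hτ : ∀ s, torsion c s = kgOf γ s / f s := by
    intro s
    rw [torsion, hτnum s, hnc2 s]
    field_simp
  have hratio : (fun t => torsion c t / curvature c t) = kgOf γ := by
    funext t
    rw [hτ t, hκ t]
    field_simp
    rw [mul_div_cancel_right₀ _ (hfne t)]
  intro s
  have hQpos : (0:ℝ) < ((kgOf γ s)^2 + 1) ^ ((3:ℝ)/2) :=
    Real.rpow_pos_of_pos (by positivity) _
  rw [sigmaOf, hκ, hτ, hratio, speed, hnc1]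
  have e1 : (1 / f s)^2 + (kgOf γ s / f s)^2 = ((kgOf γ s)^2 + 1) / (f s)^2 := by
    field_simp
    ring
  rw [e1]
  rw [Real.div_rpow (by positivity) (by positivity)]
  have e2 : ((f s)^2 : ℝ) ^ ((3:ℝ)/2) = (f s)^3 := by
    rw [← Real.rpow_natCast (f s) 2, ← Real.rpow_mul (hfpos s).le]
    norm_num
  rw [e2]
  field_simp
  rw [mul_comm (f s), mul_div_cancel_right₀ _ (hfne s)]
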